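/- Let C > 0 and θ > p be the constants of the estimate ∫_{t₀}^{t₀+h} |x̄'(s)| ds ≤ C (T−t₀)^{1/θ−1/p} h^{1−1/θ} valid for all optimal curves x̄ (depending only on M, δ, p, T). Then there is a constant K₁ = K₁(M,δ,p,T) such that for all x₀, x₁ ∈ ℝ^N and all t₀ ∈ [0,T), if |x₁ − x₀| ≤ min{ C (1 − p/θ)/(p−1) · (T−t₀)^{1−1/p}, 1 }, then u(x₁,t₀) − u(x₀,t₀) ≤ K₁ (T−t₀)^{−(p−1)(θ−p)/(p(θ−1))} |x₁ − x₀|^{(θ−p)/(θ−1)}. -/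

import Mathlib

/-!
From `x₁`, move at constant velocity to the point `x̄(t₀ + h)` reached at time `t₀ + h` by an
optimal curve `x̄` from `x₀`, and follow `x̄` afterwards. The two costs differ only on
`[t₀, t₀ + h]`, where the competitor pays at most `M (M + |x̄(t₀ + h) - x₁| / h) ^ p` per unit
time, and the integral estimate gives
`|x̄(t₀ + h) - x₁| ≤ |x₁ - x₀| + C (T - t₀) ^ (1/θ - 1/p) h ^ (1 - 1/θ)`.
With `r = |x₁ - x₀| / (T - t₀) ^ (1 - 1/p)`, the choice `h = (T - t₀) min (r ^ (θ/(θ-1))) 1`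
makes the last term at most `C |x₁ - x₀|`, and the resulting bound is a multiple of
`r ^ ((θ - p)/(θ - 1)) = (T - t₀) ^ (-(p-1)(θ-p)/(p(θ-1))) |x₁ - x₀| ^ ((θ-p)/(θ-1))`.
-/

open MeasureTheory Set intervalIntegral

noncomputable section

/-- The curve starting at `x` at time `t` with (a.e.) derivative `v`. -/
def curveOf {N : ℕ} (x : EuclideanSpace ℝ (Fin N)) (t : ℝ)
    (v : ℝ → EuclideanSpace ℝ (Fin N)) : ℝ → EuclideanSpace ℝ (Fin N) :=
  fun s => x + ∫ r in t..s, v r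

/-- The cost of the curve starting at `x` at time `t` with derivative `v`:
`∫_t^T a(x(s),s) |f(x(s),s) + x'(s)|^p ds + g(x(T))`. -/
def costOf {N : ℕ} (T p : ℝ) (a : EuclideanSpace ℝ (Fin N) → ℝ → ℝ)
    (f : EuclideanSpace ℝ (Fin N) → ℝ → EuclideanSpace ℝ (Fin N))
    (g : EuclideanSpace ℝ (Fin N) → ℝ)
    (x : EuclideanSpace ℝ (Fin N)) (t : ℝ) (v : ℝ → EuclideanSpace ℝ (Fin N)) : ℝ :=
  (∫ s in t..T, a (curveOf x t v s) s * ‖f (curveOf x t v s) s + v s‖ ^ p)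
    + g (curveOf x t v T)

/-- A curve (given through its derivative `v`) is admissible for initial time `t` if its
derivative belongs to `L^p([t,T])`. -/
def AdmissibleDeriv {N : ℕ} (T p t : ℝ) (v : ℝ → EuclideanSpace ℝ (Fin N)) : Prop :=
  MemLp v (ENNReal.ofReal p) (volume.restrict (Icc t T))

/-- The value function of the calculus of variations problem. -/
def valueFn {N : ℕ} (T p : ℝ) (a : EuclideanSpace ℝ (Fin N) → ℝ → ℝ)
    (f : EuclideanSpace ℝ (Fin N) → ℝ → EuclideanSpace ℝ (Fin N))
    (g : EuclideanSpace ℝ (Fin N) → ℝ)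
    (x : EuclideanSpace ℝ (Fin N)) (t : ℝ) : ℝ :=
  sInf {c : ℝ | ∃ v, AdmissibleDeriv T p t v ∧ costOf T p a f g x t v = c}

/-- A curve (given through its derivative `v`) is optimal for the initial condition `(x, t)`
if it is admissible and its cost realizes the infimum defining `valueFn`. -/
def IsOptimalCurve {N : ℕ} (T p : ℝ) (a : EuclideanSpace ℝ (Fin N) → ℝ → ℝ)
    (f : EuclideanSpace ℝ (Fin N) → ℝ → EuclideanSpace ℝ (Fin N))
    (g : EuclideanSpace ℝ (Fin N) → ℝ)
    (x : EuclideanSpace ℝ (Fin N)) (t : ℝ) (v : ℝ → EuclideanSpace ℝ (Fin N)) : Prop :=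
  AdmissibleDeriv T p t v ∧ costOf T p a f g x t v = valueFn T p a f g x t

/-- The standing assumptions : `a`, `f`, `g` are continuous, bounded by `M`, and `a ≥ δ`. -/
def StandardHyps {N : ℕ} (T M δ : ℝ) (a : EuclideanSpace ℝ (Fin N) → ℝ → ℝ)
    (f : EuclideanSpace ℝ (Fin N) → ℝ → EuclideanSpace ℝ (Fin N))
    (g : EuclideanSpace ℝ (Fin N) → ℝ) : Prop :=
  ContinuousOn (fun q : EuclideanSpace ℝ (Fin N) × ℝ => a q.1 q.2) (univ ×ˢ Icc 0 T) ∧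
  ContinuousOn (fun q : EuclideanSpace ℝ (Fin N) × ℝ => f q.1 q.2) (univ ×ˢ Icc 0 T) ∧
  Continuous g ∧
  (∀ x t, t ∈ Icc 0 T → |a x t| ≤ M) ∧
  (∀ x t, t ∈ Icc 0 T → ‖f x t‖ ≤ M) ∧
  (∀ x, |g x| ≤ M) ∧
  (∀ x t, t ∈ Icc 0 T → δ ≤ a x t)

open scoped ENNReal Interval

lemma add_rpow_le_two_rpow_mul_add_rpow {A B p : ℝ} (hA : 0 ≤ A) (hB : 0 ≤ B) (hp : 1 ≤ p) :
    (A + B) ^ p ≤ 2 ^ (p - 1) * (A ^ p + B ^ p) := by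
  lift A to NNReal using hA
  lift B to NNReal using hB
  exact_mod_cast NNReal.rpow_add_le_mul_rpow_add_rpow A B hp

section Exponents

variable {p θ : ℝ}

lemma min_rpow_one_le_rpow {r β γ : ℝ} (hr : 0 < r) (hβ : 0 ≤ β) (hβγ : β ≤ γ) :
    min (r ^ γ) 1 ≤ r ^ β := by
  rcases le_total r 1 with hr1 | hr1
  · exact (min_le_left _ _).trans (Real.rpow_le_rpow_of_exponent_ge hr hr1 hβγ)
  · exact (min_le_right _ _).trans (Real.one_le_rpow hr1 hβ)

lemma rpow_mul_min_rpow_one_le (hp : 1 < p) (hθ : p < θ) {r C' : ℝ} (hr : 0 < r)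
    (hrC : r ≤ C') :
    r ^ p * (min (r ^ (θ / (θ - 1))) 1) ^ (1 - p) ≤
      max 1 (C' ^ (p - (θ - p) / (θ - 1))) * r ^ ((θ - p) / (θ - 1)) := by
  have hθ1 : 0 < θ - 1 := by linarith
  rcases le_total r 1 with hr1 | hr1
  · have hexp : p + θ / (θ - 1) * (1 - p) = (θ - p) / (θ - 1) := by field_simp; ring
    rw [min_eq_left (Real.rpow_le_one hr.le hr1 (div_nonneg (by linarith) hθ1.le)),
      ← Real.rpow_mul hr.le, ← Real.rpow_add hr, hexp]
    exact le_mul_of_one_le_left (by positivity) (le_max_left _ _)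
  · have hpβ : 0 ≤ p - (θ - p) / (θ - 1) := by
      rw [sub_nonneg, div_le_iff₀ hθ1]; nlinarith
    rw [min_eq_right (Real.one_le_rpow hr1 (div_nonneg (by linarith) hθ1.le)), Real.one_rpow,
      mul_one]
    calc r ^ p = r ^ (p - (θ - p) / (θ - 1)) * r ^ ((θ - p) / (θ - 1)) := by
          rw [← Real.rpow_add hr, sub_add_cancel]
      _ ≤ max 1 (C' ^ (p - (θ - p) / (θ - 1))) * r ^ ((θ - p) / (θ - 1)) := by
          gcongr
          exact (Real.rpow_le_rpow hr.le hrC hpβ).trans (le_max_right _ _)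

def stepLength (p θ τ d : ℝ) : ℝ :=
  τ * min ((d / τ ^ (1 - 1 / p)) ^ (θ / (θ - 1))) 1

variable {τ d : ℝ}

lemma stepLength_pos (hτ : 0 < τ) (hd : 0 < d) : 0 < stepLength p θ τ d :=
  mul_pos hτ (lt_min (by positivity) one_pos)

lemma stepLength_le_self (hτ : 0 < τ) : stepLength p θ τ d ≤ τ :=
  mul_le_of_le_one_right hτ.le (min_le_right _ _)

lemma stepLength_le (hp : 1 < p) (hθ : p < θ) (hτ : 0 < τ) (hd : 0 < d) :
    stepLength p θ τ d ≤ τ * (d / τ ^ (1 - 1 / p)) ^ ((θ - p) / (θ - 1)) := by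
  have hθ1 : 0 < θ - 1 := by linarith
  exact mul_le_mul_of_nonneg_left (min_rpow_one_le_rpow (by positivity)
    (div_nonneg (by linarith) hθ1.le) (by gcongr; linarith)) hτ.le

lemma rpow_mul_stepLength_rpow_le (hθ : 1 < θ) (hτ : 0 < τ) (hd : 0 < d) :
    τ ^ (1 / θ - 1 / p) * stepLength p θ τ d ^ (1 - 1 / θ) ≤ d := by
  have hθ1 : 0 < θ - 1 := by linarith
  set r := d / τ ^ (1 - 1 / p)
  have hr : 0 < r := by positivity
  have hm : min (r ^ (θ / (θ - 1))) 1 ^ (1 - 1 / θ) ≤ r := by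
    calc min (r ^ (θ / (θ - 1))) 1 ^ (1 - 1 / θ) ≤ (r ^ (θ / (θ - 1))) ^ (1 - 1 / θ) :=
          Real.rpow_le_rpow (le_min (by positivity) zero_le_one) (min_le_left _ _)
            (sub_nonneg.2 ((div_le_one (by linarith)).2 hθ.le))
      _ = r := by
          rw [← Real.rpow_mul hr.le, show θ / (θ - 1) * (1 - 1 / θ) = 1 by field_simp,
            Real.rpow_one]
  calc τ ^ (1 / θ - 1 / p) * stepLength p θ τ d ^ (1 - 1 / θ)
      = τ ^ (1 - 1 / p) * min (r ^ (θ / (θ - 1))) 1 ^ (1 - 1 / θ) := by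
        rw [stepLength, Real.mul_rpow hτ.le (by positivity), ← mul_assoc, ← Real.rpow_add hτ,
          show 1 / θ - 1 / p + (1 - 1 / θ) = 1 - 1 / p by ring]
    _ ≤ τ ^ (1 - 1 / p) * r := by gcongr
    _ = d := mul_div_cancel₀ d (by positivity)

lemma div_stepLength_rpow_mul_le (hp : 1 < p) (hθ : p < θ) (hτ : 0 < τ) (hd : 0 < d)
    {C' : ℝ} (hdC : d ≤ C' * τ ^ (1 - 1 / p)) :
    (d / stepLength p θ τ d) ^ p * stepLength p θ τ d ≤
      max 1 (C' ^ (p - (θ - p) / (θ - 1))) * (d / τ ^ (1 - 1 / p)) ^ ((θ - p) / (θ - 1)) := by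
  set r := d / τ ^ (1 - 1 / p)
  have hr : 0 < r := by positivity
  have hdr : d = τ ^ (1 - 1 / p) * r := (mul_div_cancel₀ d (by positivity)).symm
  have hp0 : p ≠ 0 := by positivity
  have hscale : ∀ m > 0, (d / (τ * m)) ^ p * (τ * m) = r ^ p * m ^ (1 - p) := by
    intro m hm
    rw [hdr, Real.div_rpow (by positivity) (by positivity), Real.mul_rpow (by positivity) hr.le,
      ← Real.rpow_mul hτ.le, Real.mul_rpow hτ.le hm.le, Real.rpow_sub hm, Real.rpow_one,
      show (1 - 1 / p) * p = p - 1 by field_simp, Real.rpow_sub_one hτ.ne']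
    field_simp
  calc (d / stepLength p θ τ d) ^ p * stepLength p θ τ d
      = r ^ p * (min (r ^ (θ / (θ - 1))) 1) ^ (1 - p) :=
        hscale _ (lt_min (by positivity) one_pos)
    _ ≤ _ := rpow_mul_min_rpow_one_le hp hθ hr ((div_le_iff₀ (by positivity)).2 hdC)

lemma div_rpow_eq_rpow_mul_rpow (hp : 0 < p) (hτ : 0 < τ) (hd : 0 < d) (β : ℝ) :
    (d / τ ^ (1 - 1 / p)) ^ β = τ ^ (-(p - 1) * β / p) * d ^ β := by
  rw [Real.div_rpow hd.le (by positivity), ← Real.rpow_mul hτ.le, div_eq_mul_inv,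
    ← Real.rpow_neg hτ.le, mul_comm]
  congr 2
  field_simp

lemma mul_add_div_stepLength_rpow_mul_le (hp : 1 < p) (hθ : p < θ) (hτ : 0 < τ) (hd : 0 < d)
    {T M C C' : ℝ} (hτT : τ ≤ T) (hM : 0 ≤ M) (hC : 0 ≤ C) (hdC : d ≤ C' * τ ^ (1 - 1 / p)) :
    M * (M + (1 + C) * d / stepLength p θ τ d) ^ p * stepLength p θ τ d ≤
      M * 2 ^ (p - 1) * (M ^ p * T + (1 + C) ^ p * max 1 (C' ^ (p - (θ - p) / (θ - 1)))) *
        τ ^ (-(p - 1) * (θ - p) / (p * (θ - 1))) * d ^ ((θ - p) / (θ - 1)) := by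
  set h := stepLength p θ τ d
  set r := d / τ ^ (1 - 1 / p)
  have hh : 0 < h := stepLength_pos hτ hd
  have hp0 : 0 < p := zero_lt_one.trans hp
  calc M * (M + (1 + C) * d / h) ^ p * h
      ≤ M * (2 ^ (p - 1) * (M ^ p + ((1 + C) * d / h) ^ p)) * h := by
        gcongr
        exact add_rpow_le_two_rpow_mul_add_rpow hM (by positivity) hp.le
    _ = M * 2 ^ (p - 1) * (M ^ p * h + (1 + C) ^ p * ((d / h) ^ p * h)) := by
        rw [mul_div_assoc, Real.mul_rpow (by positivity) (by positivity)]; ring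
    _ ≤ M * 2 ^ (p - 1) * (M ^ p * (T * r ^ ((θ - p) / (θ - 1))) +
          (1 + C) ^ p * (max 1 (C' ^ (p - (θ - p) / (θ - 1))) * r ^ ((θ - p) / (θ - 1)))) := by
        gcongr M * 2 ^ (p - 1) * (M ^ p * ?_ + (1 + C) ^ p * ?_)
        · exact (stepLength_le hp hθ hτ hd).trans (by gcongr)
        · exact div_stepLength_rpow_mul_le hp hθ hτ hd hdC
    _ = _ := by
        rw [div_rpow_eq_rpow_mul_rpow hp0 hτ hd,
          show -(p - 1) * ((θ - p) / (θ - 1)) / p = -(p - 1) * (θ - p) / (p * (θ - 1)) by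
            field_simp]
        ring

end Exponents

def constThen {E : Type*} (b : ℝ) (c : E) (v : ℝ → E) : ℝ → E :=
  fun s => if s ≤ b then c else v s

lemma memLp_constThen {E : Type*} [NormedAddCommGroup E] {v : ℝ → E} {q : ℝ≥0∞}
    {μ : Measure ℝ} [IsFiniteMeasure μ] (b : ℝ) (c : E) (hv : MemLp v q μ) :
    MemLp (constThen b c v) q μ := by
  have : constThen b c v = (Iic b).piecewise (fun _ => c) v := by
    ext1 s; simp [constThen, Set.piecewise]
  rw [this]
  exact (memLp_const c).piecewise measurableSet_Iic (hv.restrict _)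

section Trajectories

variable {N : ℕ} {T t : ℝ} {x y : EuclideanSpace ℝ (Fin N)} {v : ℝ → EuclideanSpace ℝ (Fin N)}

lemma curveOf_add_integral {b s : ℝ} (h₁ : IntervalIntegrable v volume t b)
    (h₂ : IntervalIntegrable v volume b s) :
    curveOf x t v s = curveOf x t v b + ∫ r in b..s, v r := by
  simp only [curveOf, ← integral_add_adjacent_intervals h₁ h₂, add_assoc]

lemma norm_curveOf_sub_le {s : ℝ} (hts : t ≤ s) (y : EuclideanSpace ℝ (Fin N)) :
    ‖curveOf x t v s - y‖ ≤ ‖x - y‖ + ∫ r in t..s, ‖v r‖ :=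
  calc ‖curveOf x t v s - y‖ = ‖(x - y) + ∫ r in t..s, v r‖ := by
        rw [curveOf, add_sub_right_comm]
    _ ≤ ‖x - y‖ + ∫ r in t..s, ‖v r‖ :=
        (norm_add_le _ _).trans
          (add_le_add_right (intervalIntegral.norm_integral_le_integral_norm hts) _)

lemma continuousOn_curveOf (htT : t ≤ T) (hv : IntegrableOn v (Icc t T)) :
    ContinuousOn (curveOf x t v) (Icc t T) := by
  rw [← uIcc_of_le htT] at hv ⊢
  exact continuousOn_const.add (continuousOn_primitive_interval hv)

/-- The velocity that is constantly `c` up to time `b` and agrees with `v` afterwards. -/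
lemma curveOf_constThen {b s : ℝ} {c : EuclideanSpace ℝ (Fin N)} (htb : t ≤ b) (hbs : b ≤ s)
    (hv : IntervalIntegrable v volume t s) (hc : y + (b - t) • c = curveOf x t v b) :
    curveOf y t (constThen b c v) s = curveOf x t v s := by
  have hw₁ : EqOn (constThen b c v) (fun _ => c) (Ι t b) := fun r hr =>
    if_pos (by rw [uIoc_of_le htb] at hr; exact hr.2)
  have hw₂ : EqOn (constThen b c v) v (Ι b s) := fun r hr =>
    if_neg (by rw [uIoc_of_le hbs] at hr; exact not_le.2 hr.1)
  have hv₁ : IntervalIntegrable v volume t b := hv.mono_set (uIcc_subset_uIcc_left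
    (by rw [uIcc_of_le (htb.trans hbs)]; exact ⟨htb, hbs⟩))
  have hv₂ : IntervalIntegrable v volume b s := hv.mono_set (uIcc_subset_uIcc_right
    (by rw [uIcc_of_le (htb.trans hbs)]; exact ⟨htb, hbs⟩))
  rw [curveOf_add_integral ((intervalIntegrable_congr hw₁).2 intervalIntegrable_const)
      ((intervalIntegrable_congr hw₂).2 hv₂), curveOf_add_integral hv₁ hv₂,
    integral_congr_ae (Filter.Eventually.of_forall hw₂), curveOf,
    integral_congr_ae (Filter.Eventually.of_forall hw₁), intervalIntegral.integral_const, hc]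

end Trajectories

section Cost

variable {N : ℕ} {T p M δ : ℝ} {a : EuclideanSpace ℝ (Fin N) → ℝ → ℝ}
  {f : EuclideanSpace ℝ (Fin N) → ℝ → EuclideanSpace ℝ (Fin N)}
  {g : EuclideanSpace ℝ (Fin N) → ℝ} {x y : EuclideanSpace ℝ (Fin N)} {t s : ℝ}
  {v : ℝ → EuclideanSpace ℝ (Fin N)}

def runningCost (p : ℝ) (a : EuclideanSpace ℝ (Fin N) → ℝ → ℝ)
    (f : EuclideanSpace ℝ (Fin N) → ℝ → EuclideanSpace ℝ (Fin N))
    (y v : ℝ → EuclideanSpace ℝ (Fin N)) (s : ℝ) : ℝ :=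
  a (y s) s * ‖f (y s) s + v s‖ ^ p

lemma costOf_eq_integral_runningCost (T p : ℝ) (a : EuclideanSpace ℝ (Fin N) → ℝ → ℝ)
    (f : EuclideanSpace ℝ (Fin N) → ℝ → EuclideanSpace ℝ (Fin N))
    (g : EuclideanSpace ℝ (Fin N) → ℝ) (x : EuclideanSpace ℝ (Fin N)) (t : ℝ)
    (v : ℝ → EuclideanSpace ℝ (Fin N)) :
    costOf T p a f g x t v =
      (∫ s in t..T, runningCost p a f (curveOf x t v) v s) + g (curveOf x t v T) :=
  rfl

lemma runningCost_nonneg (hyp : StandardHyps T M δ a f g) (hδ : 0 < δ) (hs : s ∈ Icc 0 T)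
    (y v : ℝ → EuclideanSpace ℝ (Fin N)) : 0 ≤ runningCost p a f y v s :=
  mul_nonneg (hδ.le.trans (hyp.2.2.2.2.2.2 _ _ hs)) (by positivity)

lemma runningCost_le (hyp : StandardHyps T M δ a f g) (hp : 0 ≤ p) (hs : s ∈ Icc 0 T)
    (y v : ℝ → EuclideanSpace ℝ (Fin N)) :
    runningCost p a f y v s ≤ M * (M + ‖v s‖) ^ p := by
  obtain ⟨-, -, -, haM, hfM, -, -⟩ := hyp
  have hM : 0 ≤ M := (abs_nonneg _).trans (haM (y s) s hs)
  have hfv : ‖f (y s) s + v s‖ ≤ M + ‖v s‖ := by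
    have := hfM (y s) s hs
    linarith [norm_add_le (f (y s) s) (v s)]
  unfold runningCost
  exact mul_le_mul (abs_le.1 (haM _ _ hs)).2
    (Real.rpow_le_rpow (norm_nonneg _) hfv hp) (by positivity) hM

lemma integrableOn_runningCost (hyp : StandardHyps T M δ a f g) (hp : 1 ≤ p) (ht : 0 ≤ t)
    (htT : t ≤ T) (hv : AdmissibleDeriv T p t v) :
    IntegrableOn (runningCost p a f (curveOf x t v) v) (Icc t T) := by
  obtain ⟨ha, hf, -, haM, hfM, -, -⟩ := hyp
  have hp1 : 1 ≤ ENNReal.ofReal p := by simpa using hp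
  have hpath : ContinuousOn (fun s => (curveOf x t v s, s)) (Icc t T) :=
    (continuousOn_curveOf htT (hv.integrable hp1)).prodMk continuousOn_id
  have hmaps : MapsTo (fun s => (curveOf x t v s, s)) (Icc t T) (univ ×ˢ Icc 0 T) :=
    fun s hs => ⟨mem_univ _, ht.trans hs.1, hs.2⟩
  have hfv : MemLp (fun s => f (curveOf x t v s) s + v s) (ENNReal.ofReal p)
      (volume.restrict (Icc t T)) :=
    (MemLp.of_bound ((hf.comp hpath hmaps).aestronglyMeasurable measurableSet_Icc) M
      ((ae_restrict_mem measurableSet_Icc).mono fun s hs =>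
        hfM _ _ ⟨ht.trans hs.1, hs.2⟩)).add hv
  have hnorm := hfv.integrable_norm_rpow (by simp; linarith) ENNReal.ofReal_ne_top
  rw [ENNReal.toReal_ofReal (by linarith)] at hnorm
  exact hnorm.bdd_mul ((ha.comp hpath hmaps).aestronglyMeasurable measurableSet_Icc)
    (c := M) ((ae_restrict_mem measurableSet_Icc).mono fun s hs =>
      haM _ _ ⟨ht.trans hs.1, hs.2⟩)

lemma neg_le_costOf (hyp : StandardHyps T M δ a f g) (hδ : 0 < δ) (ht : 0 ≤ t) (htT : t ≤ T)
    (x : EuclideanSpace ℝ (Fin N)) (v : ℝ → EuclideanSpace ℝ (Fin N)) :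
    -M ≤ costOf T p a f g x t v := by
  have hL : 0 ≤ ∫ s in t..T, runningCost p a f (curveOf x t v) v s :=
    integral_nonneg htT fun s hs => runningCost_nonneg hyp hδ ⟨ht.trans hs.1, hs.2⟩ _ _
  have hg : -M ≤ g (curveOf x t v T) := neg_le_of_abs_le (hyp.2.2.2.2.2.1 _)
  rw [costOf_eq_integral_runningCost]
  linarith

lemma valueFn_le_costOf (hyp : StandardHyps T M δ a f g) (hδ : 0 < δ) (ht : 0 ≤ t)
    (htT : t ≤ T) (hv : AdmissibleDeriv T p t v) :
    valueFn T p a f g x t ≤ costOf T p a f g x t v :=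
  csInf_le ⟨-M, by rintro _ ⟨w, -, rfl⟩; exact neg_le_costOf hyp hδ ht htT x w⟩ ⟨v, hv, rfl⟩

lemma costOf_constThen_le (hyp : StandardHyps T M δ a f g) (hδ : 0 < δ) (hp : 1 ≤ p)
    (ht : 0 ≤ t) {b : ℝ} (htb : t ≤ b) (hbT : b ≤ T) {c : EuclideanSpace ℝ (Fin N)}
    (hv : AdmissibleDeriv T p t v) (hc : y + (b - t) • c = curveOf x t v b) :
    costOf T p a f g y t (constThen b c v) ≤
      costOf T p a f g x t v + (b - t) * (M * (M + ‖c‖) ^ p) := by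
  set w := constThen b c v
  have hvi : IntegrableOn v (Icc t T) := hv.integrable (by simpa using hp)
  have hcurve : ∀ s, b ≤ s → s ≤ T → curveOf y t w s = curveOf x t v s := fun s hbs hsT =>
    curveOf_constThen htb hbs ((hvi.mono_set
      (uIcc_subset_Icc ⟨le_rfl, htb.trans (hbs.trans hsT)⟩
        ⟨htb.trans hbs, hsT⟩)).intervalIntegrable) hc
  have hLw := integrableOn_runningCost (x := y) hyp hp ht (htb.trans hbT)
    (memLp_constThen b c hv)
  have hLv := integrableOn_runningCost (x := x) hyp hp ht (htb.trans hbT) hv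
  have hI : ∀ {F : ℝ → ℝ}, IntegrableOn F (Icc t T) → ∀ {u u'}, t ≤ u → u ≤ u' → u' ≤ T →
      IntervalIntegrable F volume u u' := fun hF _ _ h₁ h₂ h₃ =>
    (hF.mono_set (uIcc_subset_Icc ⟨h₁, h₂.trans h₃⟩ ⟨h₁.trans h₂, h₃⟩)).intervalIntegrable
  have htail : ∫ s in b..T, runningCost p a f (curveOf y t w) w s =
      ∫ s in b..T, runningCost p a f (curveOf x t v) v s := by
    refine integral_congr_ae (Filter.Eventually.of_forall fun s hs => ?_)
    rw [uIoc_of_le hbT] at hs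
    simp only [runningCost, hcurve s hs.1.le hs.2, w, constThen, if_neg (not_le.2 hs.1)]
  have hhead_w : ∫ s in t..b, runningCost p a f (curveOf y t w) w s ≤
      (b - t) * (M * (M + ‖c‖) ^ p) := by
    calc ∫ s in t..b, runningCost p a f (curveOf y t w) w s
        ≤ ∫ _ in t..b, M * (M + ‖c‖) ^ p := by
          refine integral_mono_on htb (hI hLw le_rfl htb hbT) intervalIntegrable_const
            fun s hs => ?_
          have := runningCost_le hyp (zero_le_one.trans hp) ⟨ht.trans hs.1, hs.2.trans hbT⟩
            (curveOf y t w) w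
          simpa only [w, constThen, if_pos hs.2] using this
      _ = (b - t) * (M * (M + ‖c‖) ^ p) := by
          rw [intervalIntegral.integral_const, smul_eq_mul]
  have hhead_v : 0 ≤ ∫ s in t..b, runningCost p a f (curveOf x t v) v s :=
    integral_nonneg htb fun s hs =>
      runningCost_nonneg hyp hδ ⟨ht.trans hs.1, hs.2.trans hbT⟩ _ _
  rw [costOf_eq_integral_runningCost, costOf_eq_integral_runningCost, hcurve T hbT le_rfl,
    ← integral_add_adjacent_intervals (hI hLw le_rfl htb hbT) (hI hLw htb hbT le_rfl),
    ← integral_add_adjacent_intervals (hI hLv le_rfl htb hbT) (hI hLv htb hbT le_rfl), htail]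
  linarith

lemma valueFn_sub_le_of_isOptimalCurve (hyp : StandardHyps T M δ a f g) (hδ : 0 < δ)
    (hp : 1 ≤ p) (ht : 0 ≤ t) (hv : IsOptimalCurve T p a f g x t v) {h : ℝ} (hh : 0 < h)
    (hhT : h ≤ T - t) (y : EuclideanSpace ℝ (Fin N)) :
    valueFn T p a f g y t - valueFn T p a f g x t ≤
      M * (M + ‖curveOf x t v (t + h) - y‖ / h) ^ p * h := by
  set c := h⁻¹ • (curveOf x t v (t + h) - y)
  have hc : y + (t + h - t) • c = curveOf x t v (t + h) := by
    rw [add_sub_cancel_left, smul_smul, mul_inv_cancel₀ hh.ne', one_smul, add_sub_cancel]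
  have hcnorm : ‖c‖ = ‖curveOf x t v (t + h) - y‖ / h := by
    rw [norm_smul, norm_inv, Real.norm_of_nonneg hh.le, inv_mul_eq_div]
  have hw := costOf_constThen_le hyp hδ hp ht (by linarith) (by linarith) hv.1 hc
  have hy := valueFn_le_costOf (x := y) hyp hδ ht (by linarith) (memLp_constThen (t + h) c hv.1)
  rw [add_sub_cancel_left, hcnorm, hv.2] at hw
  linarith

end Cost

/-- space regularity: given the constants `C > 0`, `θ > p` of the integral
estimate for optimal curves, there is `K₁ = K₁(M,δ,p,T)` such that whenever
`|x₁ - x₀| ≤ min{C(1-p/θ)/(p-1) (T-t₀)^{1-1/p}, 1}`, one has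
`u(x₁,t₀) - u(x₀,t₀) ≤ K₁ (T-t₀)^{-(p-1)(θ-p)/(p(θ-1))} |x₁-x₀|^{(θ-p)/(θ-1)}`. -/
theorem space_regularity_of_value_function
    (T p M δ : ℝ) (hT : 0 < T) (hp : 1 < p) (hM : 0 < M) (hδ : 0 < δ)
    (C θ : ℝ) (hC : 0 < C) (hθ : p < θ) :
    ∃ K₁ > (0:ℝ),
      ∀ (N : ℕ), 1 ≤ N →
        ∀ (a : EuclideanSpace ℝ (Fin N) → ℝ → ℝ)
          (f : EuclideanSpace ℝ (Fin N) → ℝ → EuclideanSpace ℝ (Fin N))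
          (g : EuclideanSpace ℝ (Fin N) → ℝ), StandardHyps T M δ a f g →
          -- every initial condition admits an optimal curve
          (∀ (x : EuclideanSpace ℝ (Fin N)) (t : ℝ), t ∈ Ico 0 T →
            ∃ v, IsOptimalCurve T p a f g x t v) →
          -- the integral estimate for optimal curves, with constants `C` and `θ`
          (∀ (x : EuclideanSpace ℝ (Fin N)) (t : ℝ), t ∈ Ico 0 T →
            ∀ v : ℝ → EuclideanSpace ℝ (Fin N), IsOptimalCurve T p a f g x t v →
              ∀ h ∈ Icc 0 (T - t),
                ∫ s in t..t + h, ‖v s‖ ≤ C * (T - t) ^ (1 / θ - 1 / p) * h ^ (1 - 1 / θ)) →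
          ∀ (x₀ x₁ : EuclideanSpace ℝ (Fin N)) (t₀ : ℝ), t₀ ∈ Ico 0 T →
            ‖x₁ - x₀‖ ≤ min (C * (1 - p / θ) / (p - 1) * (T - t₀) ^ (1 - 1 / p)) 1 →
            valueFn T p a f g x₁ t₀ - valueFn T p a f g x₀ t₀ ≤
              K₁ * (T - t₀) ^ (-(p - 1) * (θ - p) / (p * (θ - 1))) *
                ‖x₁ - x₀‖ ^ ((θ - p) / (θ - 1)) := by
  have hβ : 0 < (θ - p) / (θ - 1) := div_pos (by linarith) (by linarith)
  set C' := C * (1 - p / θ) / (p - 1)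
  set K := max 1 (C' ^ (p - (θ - p) / (θ - 1)))
  refine ⟨M * 2 ^ (p - 1) * (M ^ p * T + (1 + C) ^ p * K), by positivity, ?_⟩
  intro N _ a f g hyp hexists hest x₀ x₁ t₀ ht₀ hd
  rcases (norm_nonneg (x₁ - x₀)).eq_or_lt with hd0 | hd0
  · rw [norm_sub_eq_zero_iff.1 hd0.symm, sub_self, sub_self, norm_zero,
      Real.zero_rpow hβ.ne', mul_zero]
  set d := ‖x₁ - x₀‖
  set τ := T - t₀
  have hτ : 0 < τ := sub_pos.2 ht₀.2
  set h := stepLength p θ τ d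
  have hh : 0 < h := stepLength_pos hτ hd0
  have hhτ : h ≤ τ := stepLength_le_self hτ
  obtain ⟨v, hv⟩ := hexists x₀ t₀ ht₀
  have hz : ‖curveOf x₀ t₀ v (t₀ + h) - x₁‖ ≤ (1 + C) * d :=
    calc ‖curveOf x₀ t₀ v (t₀ + h) - x₁‖ ≤ d + ∫ r in t₀..t₀ + h, ‖v r‖ := by
          rw [show d = ‖x₀ - x₁‖ from norm_sub_rev _ _]
          exact norm_curveOf_sub_le (by linarith) x₁
      _ ≤ d + C * (τ ^ (1 / θ - 1 / p) * h ^ (1 - 1 / θ)) := by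
          rw [← mul_assoc]; gcongr; exact hest x₀ t₀ ht₀ v hv h ⟨hh.le, hhτ⟩
      _ ≤ (1 + C) * d := by
          linarith [mul_le_mul_of_nonneg_left
            (rpow_mul_stepLength_rpow_le (p := p) (by linarith : 1 < θ) hτ hd0) hC.le]
  calc valueFn T p a f g x₁ t₀ - valueFn T p a f g x₀ t₀
      ≤ M * (M + ‖curveOf x₀ t₀ v (t₀ + h) - x₁‖ / h) ^ p * h :=
        valueFn_sub_le_of_isOptimalCurve hyp hδ hp.le ht₀.1 hv hh hhτ x₁
    _ ≤ M * (M + (1 + C) * d / h) ^ p * h := by gcongr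
    _ ≤ _ := mul_add_div_stepLength_rpow_mul_le hp hθ hτ hd0 (by linarith [ht₀.1]) hM.le hC.le
        (hd.trans (min_le_left _ _))
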